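/- arXiv:1202.1590 — 9 statements merged into one kernel-verified Lean document; each statement's English description precedes it below -/
import Mathlib

section
/- Let Ψ : [n] × [m] → ℝ≥0 be a normalized valuation matrix and φ : [s] × [m] → ℝ≥0 a signaling scheme (i.e., for each j, ∑_{σ} φ(σ,j) = 1). Suppose σ ≠ σ' are two signals such that the index maximizing i ↦ ∑_j φ(σ,j)·Ψ(i,j) equals the index maximizing i ↦ ∑_j φ(σ',j)·Ψ(i,j), and likewise the second-maximizing indices coincide. Define φ* on s−1 signals by merging σ and σ' into a single signal σ* with φ*(σ*,j) = φ(σ,j) + φ(σ',j) and keeping all other signals unchanged. Then φ* is a valid signaling scheme and the revenue ∑_τ secondmax_i ∑_j φ*(τ,j)·Ψ(i,j) equals ∑_τ secondmax_i ∑_j φ(τ,j)·Ψ(i,j). -/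
open Finset

/-- The second-largest value of `f` (counting multiplicity): the supremum of
`min (f i) (f j)` over pairs of distinct indices. -/
noncomputable def secondmax {ι : Type*} [Fintype ι] (f : ι → ℝ) : ℝ :=
  sSup {x | ∃ i j : ι, i ≠ j ∧ x = min (f i) (f j)}

/-- A signaling scheme: nonnegative entries, and for each good `j` the signal
probabilities sum to one. -/
def IsScheme {S J : Type*} [Fintype S] (φ : S → J → ℝ) : Prop :=
  (∀ σ j, 0 ≤ φ σ j) ∧ ∀ j, ∑ σ, φ σ j = 1

/-- Revenue of a signaling scheme under normalized valuations `Ψ`. -/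
noncomputable def Rev {S : Type*} [Fintype S] {n : ℕ} {J : Type*} [Fintype J]
    (Ψ : Fin n → J → ℝ) (φ : S → J → ℝ) : ℝ :=
  ∑ σ, secondmax (fun i => ∑ j, φ σ j * Ψ i j)

/-! Revenue is additive over the merge: with the max and secondmax attained at the same
bidders `i₁ ≠ i₂` for both rows, the secondmax of either row and of their sum is just its
`i₂` entry, and the merged row is the sum of the two rows. -/

section secondmax

variable {ι : Type*} [Fintype ι]

theorem secondmax_eq_of_le {f : ι → ℝ} {i₁ i₂ : ι} (hi : i₁ ≠ i₂)
    (h₁ : ∀ i, f i ≤ f i₁) (h₂ : ∀ i, i ≠ i₁ → f i ≤ f i₂) :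
    secondmax f = f i₂ := by
  refine IsGreatest.csSup_eq ⟨⟨i₁, i₂, hi, (min_eq_right (h₁ i₂)).symm⟩, ?_⟩
  rintro x ⟨i, j, hij, rfl⟩
  by_cases h : i = i₁
  · subst h
    exact (min_le_right _ _).trans (h₂ j hij.symm)
  · exact (min_le_left _ _).trans (h₂ i h)

theorem secondmax_add_of_le {f g : ι → ℝ} {i₁ i₂ : ι} (hi : i₁ ≠ i₂)
    (hf₁ : ∀ i, f i ≤ f i₁) (hf₂ : ∀ i, i ≠ i₁ → f i ≤ f i₂)
    (hg₁ : ∀ i, g i ≤ g i₁) (hg₂ : ∀ i, i ≠ i₁ → g i ≤ g i₂) :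
    secondmax (f + g) = secondmax f + secondmax g := by
  rw [secondmax_eq_of_le hi hf₁ hf₂, secondmax_eq_of_le hi hg₁ hg₂]
  exact secondmax_eq_of_le (f := f + g) hi (fun i => add_le_add (hf₁ i) (hg₁ i))
    (fun i h => add_le_add (hf₂ i h) (hg₂ i h))

end secondmax

section merge

variable {S J : Type*} [Fintype S] [DecidableEq S]

theorem sum_subtype_ne_merge {M : Type*} [AddCommMonoid M] {σ σ' : S} (h : σ ≠ σ')
    (g : S → M) :
    ∑ τ : {τ : S // τ ≠ σ'}, (if τ.1 = σ then g σ + g σ' else g τ.1) = ∑ τ, g τ :=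
  calc ∑ τ : {τ : S // τ ≠ σ'}, (if τ.1 = σ then g σ + g σ' else g τ.1)
      = ∑ τ ∈ univ.erase σ', (if τ = σ then g σ + g σ' else g τ) :=
        (sum_subtype (univ.erase σ') (fun _ => by simp)
          (fun τ => if τ = σ then g σ + g σ' else g τ)).symm
    _ = ∑ τ ∈ univ.erase σ', (g τ + if τ = σ then g σ' else 0) :=
        sum_congr rfl fun τ _ => by split_ifs with hτ <;> simp [hτ]
    _ = ∑ τ ∈ univ.erase σ', g τ + g σ' := by
        rw [sum_add_distrib, sum_ite_eq', if_pos (mem_erase.2 ⟨h, mem_univ σ⟩)]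
    _ = ∑ τ, g τ := sum_erase_add _ _ (mem_univ σ')

def mergeSignals (φ : S → J → ℝ) (σ σ' : S) : {τ : S // τ ≠ σ'} → J → ℝ :=
  fun τ j => if τ.1 = σ then φ σ j + φ σ' j else φ τ.1 j

theorem IsScheme.mergeSignals {φ : S → J → ℝ} (hφ : IsScheme φ) {σ σ' : S} (h : σ ≠ σ') :
    IsScheme (mergeSignals φ σ σ') := by
  refine ⟨fun τ j => ?_, fun j => ?_⟩
  · unfold _root_.mergeSignals
    split_ifs
    exacts [add_nonneg (hφ.1 σ j) (hφ.1 σ' j), hφ.1 τ.1 j]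
  · rw [← hφ.2 j]
    exact sum_subtype_ne_merge h (φ · j)

theorem rev_mergeSignals [Fintype J] {n : ℕ} (Ψ : Fin n → J → ℝ) (φ : S → J → ℝ)
    {σ σ' : S} (h : σ ≠ σ')
    (hadd : secondmax (fun i => ∑ j, (φ σ j + φ σ' j) * Ψ i j) =
      secondmax (fun i => ∑ j, φ σ j * Ψ i j) + secondmax (fun i => ∑ j, φ σ' j * Ψ i j)) :
    Rev Ψ (mergeSignals φ σ σ') = Rev Ψ φ := by
  rw [Rev, Rev, ← sum_subtype_ne_merge h]
  refine sum_congr rfl fun τ _ => ?_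
  unfold mergeSignals
  split_ifs <;> simp only [hadd]

end merge

theorem stmt0_general {n s m : ℕ}
    (Ψ : Fin n → Fin m → ℝ)
    (φ : Fin s → Fin m → ℝ) (hφ : IsScheme φ)
    (σ σ' : Fin s) (hσσ' : σ ≠ σ') (i₁ i₂ : Fin n) (hi : i₁ ≠ i₂)
    (hmax : ∀ τ ∈ ({σ, σ'} : Finset (Fin s)), ∀ i,
      ∑ j, φ τ j * Ψ i j ≤ ∑ j, φ τ j * Ψ i₁ j)
    (hsec : ∀ τ ∈ ({σ, σ'} : Finset (Fin s)), ∀ i, i ≠ i₁ →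
      ∑ j, φ τ j * Ψ i j ≤ ∑ j, φ τ j * Ψ i₂ j) :
    IsScheme (fun (τ : {τ : Fin s // τ ≠ σ'}) j =>
        if τ.1 = σ then φ σ j + φ σ' j else φ τ.1 j) ∧
    Rev Ψ (fun (τ : {τ : Fin s // τ ≠ σ'}) j =>
        if τ.1 = σ then φ σ j + φ σ' j else φ τ.1 j) = Rev Ψ φ := by
  have hσ : σ ∈ ({σ, σ'} : Finset (Fin s)) := by simp
  have hσ' : σ' ∈ ({σ, σ'} : Finset (Fin s)) := by simp
  have hrow : (fun i => ∑ j, (φ σ j + φ σ' j) * Ψ i j) =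
      (fun i => ∑ j, φ σ j * Ψ i j) + (fun i => ∑ j, φ σ' j * Ψ i j) := by
    ext i
    simp only [add_mul, sum_add_distrib, Pi.add_apply]
  refine ⟨hφ.mergeSignals hσσ', rev_mergeSignals Ψ φ hσσ' ?_⟩
  rw [hrow]
  exact secondmax_add_of_le hi (hmax σ hσ) (hsec σ hσ) (hmax σ' hσ') (hsec σ' hσ')

/-- Merging two signals whose max- and secondmax-realizing bidders coincide yields a
valid signaling scheme on one fewer signal with the same revenue. -/
theorem stmt0 {n s m : ℕ} (hn : 2 ≤ n)
    (Ψ : Fin n → Fin m → ℝ) (hΨ : ∀ i j, 0 ≤ Ψ i j)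
    (φ : Fin s → Fin m → ℝ) (hφ : IsScheme φ)
    (σ σ' : Fin s) (hσσ' : σ ≠ σ') (i₁ i₂ : Fin n) (hi : i₁ ≠ i₂)
    (hmax : ∀ τ ∈ ({σ, σ'} : Finset (Fin s)), ∀ i,
      ∑ j, φ τ j * Ψ i j ≤ ∑ j, φ τ j * Ψ i₁ j)
    (hsec : ∀ τ ∈ ({σ, σ'} : Finset (Fin s)), ∀ i, i ≠ i₁ →
      ∑ j, φ τ j * Ψ i j ≤ ∑ j, φ τ j * Ψ i₂ j) :
    IsScheme (fun (τ : {τ : Fin s // τ ≠ σ'}) j =>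
        if τ.1 = σ then φ σ j + φ σ' j else φ τ.1 j) ∧
    Rev Ψ (fun (τ : {τ : Fin s // τ ≠ σ'}) j =>
        if τ.1 = σ then φ σ j + φ σ' j else φ τ.1 j) = Rev Ψ φ :=
  stmt0_general Ψ φ hφ σ σ' hσσ' i₁ i₂ hi hmax hsec
end

section
/- For any normalized valuation matrix Ψ : [n] × [m] → ℝ≥0 and any signaling scheme φ with s signals, the revenue Rev(φ) = ∑_{σ∈[s]} secondmax_{i∈[n]} ∑_{j∈[m]} φ(σ,j)·Ψ(i,j) is at most min_{i'∈[n]} ∑_{j∈[m]} max_{i≠i'} Ψ(i,j). -/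
open Finset

/-- The revenue of any signaling scheme is at most `min_{i'} ∑_j max_{i ≠ i'} Ψ(i,j)`. -/
theorem stmt1 {n s m : ℕ} (hn : 2 ≤ n)
    (Ψ : Fin n → Fin m → ℝ) (hΨ : ∀ i j, 0 ≤ Ψ i j)
    (φ : Fin s → Fin m → ℝ) (hφ : IsScheme φ) (i' : Fin n) :
    Rev Ψ φ ≤ ∑ j, (Finset.univ.erase i').sup'
      (by
        haveI : Nontrivial (Fin n) := Fin.nontrivial_iff_two_le.mpr hn
        obtain ⟨i, hi⟩ := exists_ne i'
        exact ⟨i, Finset.mem_erase.mpr ⟨hi, Finset.mem_univ i⟩⟩)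
      (fun i => Ψ i j) := by
  haveI : Nontrivial (Fin n) := Fin.nontrivial_iff_two_le.mpr hn
  obtain ⟨i₀, hi₀⟩ := exists_ne i'
  have hne : ((Finset.univ.erase i') : Finset (Fin n)).Nonempty :=
    ⟨i₀, Finset.mem_erase.mpr ⟨hi₀, Finset.mem_univ i₀⟩⟩
  set M : Fin m → ℝ := fun j => (Finset.univ.erase i').sup' hne (fun i => Ψ i j) with hM
  -- step 1: secondmax f ≤ sup' over erase i' of f
  have key : ∀ f : Fin n → ℝ, secondmax f ≤ (Finset.univ.erase i').sup' hne f := by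
    intro f
    refine csSup_le ⟨min (f i₀) (f i'), ⟨i₀, i', hi₀, rfl⟩⟩ ?_
    rintro x ⟨i, j, hij, rfl⟩
    rcases ne_or_eq i i' with h | h
    · exact le_trans (min_le_left _ _)
        (Finset.le_sup' f (Finset.mem_erase.mpr ⟨h, Finset.mem_univ i⟩))
    · have hj : j ≠ i' := by rw [← h]; exact hij.symm
      exact le_trans (min_le_right _ _)
        (Finset.le_sup' f (Finset.mem_erase.mpr ⟨hj, Finset.mem_univ j⟩))
  calc Rev Ψ φ ≤ ∑ σ, ∑ j, φ σ j * M j := by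
        apply Finset.sum_le_sum
        intro σ _
        refine le_trans (key _) ?_
        apply Finset.sup'_le
        intro i _
        exact Finset.sum_le_sum fun j _ => mul_le_mul_of_nonneg_left
          (Finset.le_sup' (fun i => Ψ i j) (by assumption)) (hφ.1 σ j)
    _ = ∑ j, M j := by
        rw [Finset.sum_comm]
        refine Finset.sum_congr rfl fun j _ => ?_
        rw [← Finset.sum_mul, hφ.2 j, one_mul]
end

section
/- Consider the KPSA with n+1 bidders {0,1,…,n} and n+1 items {0,1,…,n}, each item chosen with probability 1/(n+1), valuations V(i,i)=1 for i=1,…,n, V(0,0)=n, and V(i,j)=0 otherwise (so normalized valuations Ψ(i,j)=V(i,j)/(n+1)). Then for every s < n and every signaling scheme φ with s signals, Rev(φ) ≤ s/(n+1). -/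
open Finset

/-- In the KPSA with `n+1` bidders/items, uniform probability, `V(i,i)=1` for `i ≥ 1`,
`V(0,0)=n`, any scheme with `s < n` signals has revenue at most `s/(n+1)`. -/
theorem stmt5 {n s : ℕ} (hn : 1 ≤ n) (hs : s < n)
    (φ : Fin s → Fin (n + 1) → ℝ) (hφ : IsScheme φ) :
    Rev (fun i j : Fin (n + 1) =>
        if i = j then (if i = 0 then (n : ℝ) / (n + 1) else 1 / (n + 1)) else 0) φ
      ≤ s / (n + 1) := by
  obtain ⟨hpos, hsum⟩ := hφ
  have hn1 : (0 : ℝ) < (n : ℝ) + 1 := by positivity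
  have hb : ∀ (σ : Fin s) (i : Fin (n + 1)), φ σ i ≤ 1 := by
    intro σ i
    calc φ σ i ≤ ∑ τ, φ τ i :=
          Finset.single_le_sum (fun τ _ => hpos τ i) (Finset.mem_univ σ)
      _ = 1 := hsum i
  -- the value of bidder i ≠ 0
  have hval : ∀ (σ : Fin s) (i : Fin (n + 1)), i ≠ 0 →
      (∑ j, φ σ j * (if i = j then (if i = 0 then (n : ℝ) / (n + 1) else 1 / (n + 1)) else 0))
        ≤ 1 / ((n : ℝ) + 1) := by
    intro σ i hi
    have : (∑ j, φ σ j * (if i = j then (if i = 0 then (n : ℝ) / (n + 1) else 1 / (n + 1)) else 0))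
        = φ σ i * (1 / ((n : ℝ) + 1)) := by
      rw [Finset.sum_eq_single i]
      · simp [hi]
      · intro b _ hb'
        simp [Ne.symm hb']
      · simp
    rw [this]
    calc φ σ i * (1 / ((n : ℝ) + 1)) ≤ 1 * (1 / ((n : ℝ) + 1)) := by
          apply mul_le_mul_of_nonneg_right (hb σ i)
          positivity
      _ = 1 / ((n : ℝ) + 1) := one_mul _
  have key : ∀ σ : Fin s,
      secondmax (fun i => ∑ j, φ σ j *
        (if i = j then (if i = 0 then (n : ℝ) / (n + 1) else 1 / (n + 1)) else 0))
      ≤ 1 / ((n : ℝ) + 1) := by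
    intro σ
    apply Real.sSup_le
    · rintro x ⟨i, j, hij, rfl⟩
      by_cases hi : i = 0
      · have hj : j ≠ 0 := by rintro rfl; exact hij (hi ▸ rfl) |>.elim
        exact le_trans (min_le_right _ _) (hval σ j hj)
      · exact le_trans (min_le_left _ _) (hval σ i hi)
    · positivity
  calc Rev (fun i j : Fin (n + 1) =>
        if i = j then (if i = 0 then (n : ℝ) / (n + 1) else 1 / (n + 1)) else 0) φ
      ≤ ∑ _σ : Fin s, 1 / ((n : ℝ) + 1) := Finset.sum_le_sum (fun σ _ => key σ)
    _ = s * (1 / ((n : ℝ) + 1)) := by simp [Finset.sum_const, mul_comm]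
    _ = s / ((n : ℝ) + 1) := by ring
end

section
/- Let Ψ : [n] × [m] → ℝ≥0 and for each j let μ(j) ∈ [n] maximize i ↦ Ψ(i,j). Suppose φ is a signaling scheme such that φ(σ,j) > 0 only when μ(j) ∈ {h₁(σ), h₂(σ)}, where h₁(σ) and h₂(σ) denote bidders realizing the max and secondmax of i ↦ ∑_j φ(σ,j)·Ψ(i,j). Then the social welfare SW(φ) = ∑_σ max_i ∑_j φ(σ,j)·Ψ(i,j) satisfies SW(φ) ≥ (1/2)·∑_j Ψ(μ(j), j). -/
open Finset

/-- If goods get positive weight only on signals whose top-two bidders include the good's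
favorite bidder, the social welfare is at least half the optimal welfare. -/
theorem stmt8 {n s m : ℕ} (hn : 2 ≤ n)
    (Ψ : Fin n → Fin m → ℝ) (hΨ : ∀ i j, 0 ≤ Ψ i j)
    (φ : Fin s → Fin m → ℝ) (hφ : IsScheme φ)
    (μ : Fin m → Fin n) (hμ : ∀ i j, Ψ i j ≤ Ψ (μ j) j)
    (h₁ h₂ : Fin s → Fin n) (hh : ∀ σ, h₁ σ ≠ h₂ σ)
    (hmax : ∀ σ i, ∑ j, φ σ j * Ψ i j ≤ ∑ j, φ σ j * Ψ (h₁ σ) j)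
    (hsec : ∀ σ i, i ≠ h₁ σ → ∑ j, φ σ j * Ψ i j ≤ ∑ j, φ σ j * Ψ (h₂ σ) j)
    (hpos : ∀ σ j, 0 < φ σ j → μ j = h₁ σ ∨ μ j = h₂ σ) :
    (1 / 2) * ∑ j, Ψ (μ j) j ≤
      ∑ σ, Finset.univ.sup'
        ⟨⟨0, by omega⟩, Finset.mem_univ _⟩
        (fun i => ∑ j, φ σ j * Ψ i j) := by
  obtain ⟨hnn, hsum⟩ := hφ
  have ne : (Finset.univ : Finset (Fin n)).Nonempty := ⟨⟨0, by omega⟩, Finset.mem_univ _⟩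
  have key : ∀ σ : Fin s, ∑ j, φ σ j * Ψ (μ j) j ≤
      2 * Finset.univ.sup' ne (fun i => ∑ j, φ σ j * Ψ i j) := by
    intro σ
    have step : ∑ j, φ σ j * Ψ (μ j) j ≤
        (∑ j, φ σ j * Ψ (h₁ σ) j) + (∑ j, φ σ j * Ψ (h₂ σ) j) := by
      rw [← Finset.sum_add_distrib]
      refine Finset.sum_le_sum fun j _ => ?_
      rcases lt_or_eq_of_le (hnn σ j) with hp | hz
      · rcases hpos σ j hp with h | h
        · rw [h]; nlinarith [hΨ (h₂ σ) j, hnn σ j]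
        · rw [h]; nlinarith [hΨ (h₁ σ) j, hnn σ j]
      · rw [← hz]; ring_nf; simp
    have b1 : (∑ j, φ σ j * Ψ (h₁ σ) j) ≤
        Finset.univ.sup' ne (fun i => ∑ j, φ σ j * Ψ i j) :=
      Finset.le_sup' (fun i => ∑ j, φ σ j * Ψ i j) (Finset.mem_univ _)
    have b2 : (∑ j, φ σ j * Ψ (h₂ σ) j) ≤
        Finset.univ.sup' ne (fun i => ∑ j, φ σ j * Ψ i j) :=
      Finset.le_sup' (fun i => ∑ j, φ σ j * Ψ i j) (Finset.mem_univ _)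
    linarith
  have swap : ∑ j, Ψ (μ j) j = ∑ σ, ∑ j, φ σ j * Ψ (μ j) j := by
    rw [Finset.sum_comm]
    refine Finset.sum_congr rfl fun j _ => ?_
    rw [← Finset.sum_mul, hsum j, one_mul]
  have := Finset.sum_le_sum fun σ (_ : σ ∈ Finset.univ) => key σ
  rw [← Finset.mul_sum] at this
  linarith [swap ▸ this]
end

section
/- Let Ψ : [n] × [m] → ℝ≥0 and let φ be a signaling scheme. Fix a signal σ and an item j with φ(σ,j) > 0, and suppose μ(j) ∉ {h₁(σ), h₂(σ)} where μ(j) = argmax_i Ψ(i,j) and h₁(σ), h₂(σ) are the bidders realizing max and secondmax of i ↦ ∑_{j'} φ(σ,j')·Ψ(i,j'). Construct φ̂ by splitting σ into two signals σ', σ'' with φ̂(σ',j) = φ(σ,j), φ̂(σ',j') = 0 for j' ≠ j, and φ̂(σ'',j) = 0, φ̂(σ'',j') = φ(σ,j') for j' ≠ j. Then φ̂ is a valid signaling scheme and Rev(φ̂) ≥ Rev(φ). -/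
/-!
Splitting `σ` changes the revenue only by replacing `secondmax (g + h)` with
`secondmax g + secondmax h`, where `g i = φ(σ,j) Ψ(i,j)` and `h` collects the other items of `σ`.
Because the top bidder `μ(j)` on item `j` is neither `h₁` nor `h₂`, both `g h₁` and `g h₂` are at
most `secondmax g`. And `secondmax (g + h) ≤ (g + h) h₂ ≤ (g + h) hₖ` for both `k`; choosing
the `hₖ` with the smaller `h`-value bounds it by
`secondmax g + min (h h₁) (h h₂) ≤ secondmax g + secondmax h`.
-/

open Finset

section Secondmax

variable {ι : Type*} [Fintype ι]

lemma secondmax_bddAbove (f : ι → ℝ) :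
    BddAbove {x | ∃ i j : ι, i ≠ j ∧ x = min (f i) (f j)} :=
  ((Set.finite_range fun p : ι × ι => min (f p.1) (f p.2)).subset
    (by rintro x ⟨i, j, -, rfl⟩; exact ⟨(i, j), rfl⟩)).bddAbove

lemma min_le_secondmax (f : ι → ℝ) {i k : ι} (hik : i ≠ k) :
    min (f i) (f k) ≤ secondmax f :=
  le_csSup (secondmax_bddAbove f) ⟨i, k, hik, rfl⟩

lemma le_secondmax_of_le {f : ι → ℝ} {i k : ι} (hik : i ≠ k) (hle : f i ≤ f k) :
    f i ≤ secondmax f := by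
  simpa only [min_eq_left hle] using min_le_secondmax f hik

lemma secondmax_le_of_forall_ne {f : ι → ℝ} {a b : ι} {c : ℝ} (hab : a ≠ b)
    (H : ∀ i, i ≠ a → f i ≤ c) : secondmax f ≤ c := by
  refine csSup_le ⟨_, a, b, hab, rfl⟩ ?_
  rintro x ⟨i, k, hik, rfl⟩
  rcases eq_or_ne i a with rfl | hi
  · exact (min_le_right _ _).trans (H k hik.symm)
  · exact (min_le_left _ _).trans (H i hi)

lemma secondmax_le_add_of_eq_add {f g h : ι → ℝ} (hfgh : ∀ i, f i = g i + h i)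
    {h₁ h₂ : ι} (hh : h₁ ≠ h₂) (hmax : f h₂ ≤ f h₁) (hsec : ∀ i, i ≠ h₁ → f i ≤ f h₂)
    (hg₁ : g h₁ ≤ secondmax g) (hg₂ : g h₂ ≤ secondmax g) :
    secondmax f ≤ secondmax g + secondmax h := by
  have hf : secondmax f ≤ f h₂ := secondmax_le_of_forall_ne hh hsec
  have hmin := min_le_secondmax h hh
  rw [hfgh, hfgh] at hmax
  rw [hfgh] at hf
  rcases le_total (h h₁) (h h₂) with hc | hc
  · rw [min_eq_left hc] at hmin; linarith
  · rw [min_eq_right hc] at hmin; linarith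

end Secondmax

section SplitScheme

variable {S J : Type*} [Fintype S] [DecidableEq S] [DecidableEq J]

lemma sum_ite_eq_sub_add (f : S → ℝ) (σ : S) (b : ℝ) :
    ∑ τ, (if τ = σ then b else f τ) = ∑ τ, f τ - f σ + b := by
  simp_rw [← Function.update_apply, sum_update_of_mem (mem_univ σ),
    sum_eq_add_sum_sdiff_singleton_of_mem (mem_univ σ) f]
  ring

/-- The paper's `σ'` is `Sum.inl σ`, which keeps only item `j`; `σ''` is `Sum.inr ()`. -/
def splitScheme (φ : S → J → ℝ) (σ : S) (j : J) : S ⊕ Unit → J → ℝ := fun τ j' =>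
  Sum.elim (fun τ₀ => if τ₀ = σ then (if j' = j then φ σ j else 0) else φ τ₀ j')
    (fun _ => if j' = j then 0 else φ σ j') τ

lemma isScheme_splitScheme {φ : S → J → ℝ} (hφ : IsScheme φ) (σ : S) (j : J) :
    IsScheme (splitScheme φ σ j) := by
  constructor
  · rintro (τ | _) j' <;> simp only [splitScheme, Sum.elim_inl, Sum.elim_inr] <;>
      split_ifs <;> first | exact hφ.1 _ _ | exact le_rfl
  · intro j'
    simp only [splitScheme, Fintype.sum_sum_type, Sum.elim_inl, Sum.elim_inr,
      sum_ite_eq_sub_add (φ · j'), hφ.2, univ_unique, sum_singleton]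
    split_ifs with hj
    · subst hj; ring
    · ring

variable [Fintype J] {n : ℕ}

lemma rev_splitScheme (Ψ : Fin n → J → ℝ) (φ : S → J → ℝ) (σ : S) (j : J) :
    Rev Ψ (splitScheme φ σ j) = Rev Ψ φ - secondmax (fun i => ∑ j', φ σ j' * Ψ i j')
      + secondmax (fun i => φ σ j * Ψ i j)
      + secondmax (fun i => ∑ j', (if j' = j then 0 else φ σ j') * Ψ i j') := by
  have row (τ : S) : (fun i => ∑ j', splitScheme φ σ j (.inl τ) j' * Ψ i j') =
      if τ = σ then (fun i => φ σ j * Ψ i j) else fun i => ∑ j', φ τ j' * Ψ i j' := by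
    split_ifs with hτ <;> ext i <;> simp [splitScheme, hτ]
  rw [Rev, Rev, Fintype.sum_sum_type]
  simp_rw [row, apply_ite secondmax, sum_ite_eq_sub_add]
  simp [splitScheme]

lemma sum_mul_eq_add_sum_ite (a b : J → ℝ) (j : J) :
    ∑ j', a j' * b j' = a j * b j + ∑ j', (if j' = j then 0 else a j') * b j' := by
  simp_rw [ite_mul, zero_mul, sum_ite_eq_sub_add (fun j' => a j' * b j')]
  ring

end SplitScheme

theorem stmt9_general {n s m : ℕ}
    (Ψ : Fin n → Fin m → ℝ)
    (φ : Fin s → Fin m → ℝ) (hφ : IsScheme φ)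
    (σ : Fin s) (j : Fin m)
    (μ : Fin m → Fin n) (hμ : ∀ i, Ψ i j ≤ Ψ (μ j) j)
    (h₁ h₂ : Fin n) (hh : h₁ ≠ h₂)
    (hmax : ∀ i, ∑ j', φ σ j' * Ψ i j' ≤ ∑ j', φ σ j' * Ψ h₁ j')
    (hsec : ∀ i, i ≠ h₁ → ∑ j', φ σ j' * Ψ i j' ≤ ∑ j', φ σ j' * Ψ h₂ j')
    (hμout : μ j ≠ h₁ ∧ μ j ≠ h₂) :
    IsScheme (fun (τ : Fin s ⊕ Unit) j' =>
      Sum.elim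
        (fun τ₀ : Fin s => if τ₀ = σ then (if j' = j then φ σ j else 0) else φ τ₀ j')
        (fun _ : Unit => if j' = j then 0 else φ σ j') τ) ∧
    Rev Ψ φ ≤ Rev Ψ (fun (τ : Fin s ⊕ Unit) j' =>
      Sum.elim
        (fun τ₀ : Fin s => if τ₀ = σ then (if j' = j then φ σ j else 0) else φ τ₀ j')
        (fun _ : Unit => if j' = j then 0 else φ σ j') τ) := by
  refine ⟨isScheme_splitScheme hφ σ j, ?_⟩
  have hitem (i : Fin n) (hi : i ≠ μ j) :
      φ σ j * Ψ i j ≤ secondmax (fun i => φ σ j * Ψ i j) :=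
    le_secondmax_of_le (f := fun i => φ σ j * Ψ i j) hi
      (mul_le_mul_of_nonneg_left (hμ i) (hφ.1 σ j))
  have hsplit := secondmax_le_add_of_eq_add (fun i => sum_mul_eq_add_sum_ite (φ σ) (Ψ i) j)
    hh (hmax h₂) hsec (hitem h₁ hμout.1.symm) (hitem h₂ hμout.2.symm)
  change _ ≤ Rev Ψ (splitScheme φ σ j)
  rw [rev_splitScheme]
  linarith

/-- Splitting off an item `j` with `μ(j) ∉ {h₁(σ), h₂(σ)}` from signal `σ` into its own
signal yields a valid scheme with at least the same revenue. -/
theorem stmt9 {n s m : ℕ} (hn : 2 ≤ n)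
    (Ψ : Fin n → Fin m → ℝ) (hΨ : ∀ i j, 0 ≤ Ψ i j)
    (φ : Fin s → Fin m → ℝ) (hφ : IsScheme φ)
    (σ : Fin s) (j : Fin m) (hpos : 0 < φ σ j)
    (μ : Fin m → Fin n) (hμ : ∀ i, Ψ i j ≤ Ψ (μ j) j)
    (h₁ h₂ : Fin n) (hh : h₁ ≠ h₂)
    (hmax : ∀ i, ∑ j', φ σ j' * Ψ i j' ≤ ∑ j', φ σ j' * Ψ h₁ j')
    (hsec : ∀ i, i ≠ h₁ → ∑ j', φ σ j' * Ψ i j' ≤ ∑ j', φ σ j' * Ψ h₂ j')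
    (hμout : μ j ≠ h₁ ∧ μ j ≠ h₂) :
    IsScheme (fun (τ : Fin s ⊕ Unit) j' =>
      Sum.elim
        (fun τ₀ : Fin s => if τ₀ = σ then (if j' = j then φ σ j else 0) else φ τ₀ j')
        (fun _ : Unit => if j' = j then 0 else φ σ j') τ) ∧
    Rev Ψ φ ≤ Rev Ψ (fun (τ : Fin s ⊕ Unit) j' =>
      Sum.elim
        (fun τ₀ : Fin s => if τ₀ = σ then (if j' = j then φ σ j else 0) else φ τ₀ j')
        (fun _ : Unit => if j' = j then 0 else φ σ j') τ) :=
  stmt9_general Ψ φ hφ σ j μ hμ h₁ h₂ hh hmax hsec hμout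
end

section
/- Let Ψ : [n] × [m] → ℝ≥0 with n ≥ 2. There exists a clustering scheme (a partition of [m] into clusters) whose revenue ∑_{C} secondmax_{i∈[n]} ∑_{j∈C} Ψ(i,j) is at least half of the revenue of any signaling scheme. Consequently, the optimal signaling revenue is at most twice the optimal clustering revenue. -/
open Finset

lemma secondmax_bdd {ι : Type*} [Fintype ι] (f : ι → ℝ) :
    BddAbove {x | ∃ i j : ι, i ≠ j ∧ x = min (f i) (f j)} := by
  have : {x | ∃ i j : ι, i ≠ j ∧ x = min (f i) (f j)} ⊆
      (fun p : ι × ι => min (f p.1) (f p.2)) '' Set.univ := by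
    rintro x ⟨i, j, hij, rfl⟩; exact ⟨(i, j), trivial, rfl⟩
  exact (((Set.finite_univ).image _).subset this).bddAbove

lemma min_le_secondmax_s11 {ι : Type*} [Fintype ι] (f : ι → ℝ) {u v : ι} (h : u ≠ v) :
    min (f u) (f v) ≤ secondmax f :=
  le_csSup (secondmax_bdd f) ⟨u, v, h, rfl⟩

lemma secondmax_le {ι : Type*} [Fintype ι] (f : ι → ℝ) {b : ℝ}
    (hne : ∃ u v : ι, u ≠ v) (hb : ∀ u v : ι, u ≠ v → min (f u) (f v) ≤ b) :
    secondmax f ≤ b := by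
  obtain ⟨u, v, huv⟩ := hne
  exact csSup_le ⟨_, u, v, huv, rfl⟩ (by rintro x ⟨i, j, hij, rfl⟩; exact hb i j hij)

lemma secondmax_nonneg {n : ℕ} (hn : 2 ≤ n) (f : Fin n → ℝ) (hf : ∀ i, 0 ≤ f i) :
    0 ≤ secondmax f := by
  have h01 : (⟨0, by omega⟩ : Fin n) ≠ ⟨1, by omega⟩ := by simp [Fin.ext_iff]
  exact le_trans (le_min (hf _) (hf _)) (min_le_secondmax_s11 f h01)

lemma cl_rev {n m : ℕ} (hn : 2 ≤ n) (Ψ : Fin n → Fin m → ℝ) (hΨ : ∀ i j, 0 ≤ Ψ i j)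
    (κ : Fin m → ℕ) :
    ∃ cl : Fin m → Fin m,
      ∑ k ∈ (univ : Finset (Fin m)).image κ,
        secondmax (fun i => ∑ j ∈ univ.filter (fun j' => κ j' = k), Ψ i j)
      ≤ Rev Ψ (fun σ j => if cl j = σ then (1:ℝ) else 0) := by
  rcases Nat.eq_zero_or_pos m with hm | hm
  · subst hm
    refine ⟨id, ?_⟩
    have h1 : (univ : Finset (Fin 0)).image κ = ∅ := by simp
    rw [h1]
    simp [Rev]
  · set cl : Fin m → Fin m :=
      fun j => (univ.filter (fun j' => κ j' = κ j)).min' ⟨j, by simp⟩ with hcl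
    have hclmem : ∀ j, κ (cl j) = κ j := by
      intro j
      have := Finset.min'_mem (univ.filter (fun j' => κ j' = κ j)) ⟨j, by simp⟩
      simpa [hcl] using this
    have hcliff : ∀ j j', cl j = cl j' ↔ κ j = κ j' := by
      intro j j'
      constructor
      · intro h
        rw [← hclmem j, h, hclmem j']
      · intro h
        simp only [hcl, h]
    refine ⟨cl, ?_⟩
    have hfib : ∀ σ : Fin m, (fun i => ∑ j, (if cl j = σ then (1:ℝ) else 0) * Ψ i j)
        = fun i => ∑ j ∈ univ.filter (fun j' => cl j' = σ), Ψ i j := by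
      intro σ
      funext i
      rw [Finset.sum_filter]
      congr 1; funext j
      by_cases h : cl j = σ <;> simp [h]
    have key : ∑ k ∈ (univ : Finset (Fin m)).image κ,
        secondmax (fun i => ∑ j ∈ univ.filter (fun j' => κ j' = k), Ψ i j)
      = ∑ σ ∈ (univ : Finset (Fin m)).image cl,
        secondmax (fun i => ∑ j ∈ univ.filter (fun j' => cl j' = σ), Ψ i j) := by
      refine (Finset.sum_bij (fun σ _ => κ σ) ?_ ?_ ?_ ?_).symm
      · intro σ hσ
        obtain ⟨j, _, rfl⟩ := Finset.mem_image.mp hσ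
        exact Finset.mem_image.mpr ⟨j, by simp, (hclmem j).symm⟩
      · intro σ hσ σ' hσ' h
        obtain ⟨j, _, rfl⟩ := Finset.mem_image.mp hσ
        obtain ⟨j', _, rfl⟩ := Finset.mem_image.mp hσ'
        rw [hclmem, hclmem] at h
        exact (hcliff j j').mpr h
      · intro k hk
        obtain ⟨j, _, rfl⟩ := Finset.mem_image.mp hk
        exact ⟨cl j, Finset.mem_image.mpr ⟨j, by simp, rfl⟩, hclmem j⟩
      · intro σ hσ
        obtain ⟨j, _, rfl⟩ := Finset.mem_image.mp hσ
        congr 1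
        funext i
        congr 1
        apply Finset.filter_congr
        intro j' _
        rw [hcliff j' j, hclmem j]
    rw [Rev, key]
    simp only [hfib]
    refine Finset.sum_le_sum_of_subset_of_nonneg (Finset.subset_univ _) ?_
    intro σ _ _
    exact secondmax_nonneg hn _ (fun i => Finset.sum_nonneg fun j _ => hΨ i j)

lemma rev_le {n m : ℕ} (hn : 2 ≤ n) (Ψ : Fin n → Fin m → ℝ) (i₀ : Fin n)
    (c : Fin m → ℝ) (hc : ∀ i, i ≠ i₀ → ∀ j, Ψ i j ≤ c j)
    (s : ℕ) (φ : Fin s → Fin m → ℝ) (hφ : IsScheme φ) :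
    Rev Ψ φ ≤ ∑ j, c j := by
  obtain ⟨hφ0, hφ1⟩ := hφ
  have hσ : ∀ σ : Fin s, secondmax (fun i => ∑ j, φ σ j * Ψ i j) ≤ ∑ j, φ σ j * c j := by
    intro σ
    refine secondmax_le _ ⟨⟨0, by omega⟩, ⟨1, by omega⟩, by simp [Fin.ext_iff]⟩ ?_
    intro u v huv
    have hb : ∀ w : Fin n, w ≠ i₀ → ∑ j, φ σ j * Ψ w j ≤ ∑ j, φ σ j * c j := fun w hw =>
      Finset.sum_le_sum fun j _ => mul_le_mul_of_nonneg_left (hc w hw j) (hφ0 σ j)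
    rcases eq_or_ne u i₀ with h | h
    · exact le_trans (min_le_right _ _) (hb v (fun hv => huv (by rw [h, hv])))
    · exact le_trans (min_le_left _ _) (hb u h)
  calc Rev Ψ φ ≤ ∑ σ, ∑ j, φ σ j * c j := Finset.sum_le_sum fun σ _ => hσ σ
    _ = ∑ j, (∑ σ, φ σ j) * c j := by rw [Finset.sum_comm]; simp [Finset.sum_mul]
    _ = ∑ j, c j := by simp [hφ1]

/-- There exists a clustering scheme (a partition of the goods, encoded by a labeling
`cl : Fin m → Fin m`) whose revenue is at least half the revenue of any signaling scheme. -/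
theorem stmt11 {n m : ℕ} (hn : 2 ≤ n)
    (Ψ : Fin n → Fin m → ℝ) (hΨ : ∀ i j, 0 ≤ Ψ i j) :
    ∃ cl : Fin m → Fin m, ∀ (s : ℕ) (φ : Fin s → Fin m → ℝ), IsScheme φ →
      Rev Ψ φ ≤ 2 * Rev Ψ (fun (σ : Fin m) (j : Fin m) => if cl j = σ then (1 : ℝ) else 0) := by
  classical
  have hne : (univ : Finset (Fin n)).Nonempty := ⟨⟨0, by omega⟩, mem_univ _⟩
  have hαex : ∀ j : Fin m, ∃ a, ∀ i, Ψ i j ≤ Ψ a j := by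
    intro j
    obtain ⟨a, _, ha⟩ := Finset.exists_max_image univ (fun i => Ψ i j) hne
    exact ⟨a, fun i => ha i (mem_univ i)⟩
  choose α hα using hαex
  have hβex : ∀ j : Fin m, ∃ b, b ≠ α j ∧ ∀ i, i ≠ α j → Ψ i j ≤ Ψ b j := by
    intro j
    have hers : (univ.erase (α j)).Nonempty := by
      rw [← Finset.card_pos, Finset.card_erase_of_mem (mem_univ _)]
      simp only [Finset.card_univ, Fintype.card_fin]
      omega
    obtain ⟨b, hb, hbmax⟩ := Finset.exists_max_image _ (fun i => Ψ i j) hers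
    exact ⟨b, (Finset.mem_erase.mp hb).1,
      fun i hi => hbmax i (Finset.mem_erase.mpr ⟨hi, mem_univ _⟩)⟩
  choose β hβne hβ using hβex
  set w : Fin n → ℝ := fun i => ∑ j ∈ univ.filter (fun j => α j = i), Ψ (α j) j with hw
  set e : Equiv.Perm (Fin n) := (Fin.revPerm).trans (Tuple.sort w) with he
  have hanti : ∀ k l : Fin n, k ≤ l → w (e l) ≤ w (e k) := by
    intro k l hkl
    have := Tuple.monotone_sort w (Fin.rev_le_rev.mpr hkl)
    simpa [he] using this
  set ν : Fin m → ℕ := fun j => ((e.symm (α j)) : ℕ) with hν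
  have hν_lt : ∀ j, ν j < n := fun j => (e.symm (α j)).isLt
  have hα_eq : ∀ j (h : ν j < n), α j = e ⟨ν j, h⟩ := by
    intro j h
    have h2 : (⟨ν j, h⟩ : Fin n) = e.symm (α j) := Fin.ext rfl
    rw [h2, Equiv.apply_symm_apply]
  -- fiber sums
  have hW : ∀ l (h : l < n),
      ∑ j ∈ univ.filter (fun j => ν j = l), Ψ (α j) j = w (e ⟨l, h⟩) := by
    intro l h
    rw [hw]
    apply Finset.sum_congr
    · apply Finset.filter_congr
      intro j _
      constructor
      · intro hl
        rw [hα_eq j (hν_lt j)]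
        congr 1
        exact Fin.ext hl
      · intro hα'
        have : e.symm (α j) = ⟨l, h⟩ := by rw [hα']; exact Equiv.symm_apply_apply _ _
        simpa [hν] using congrArg (fun x : Fin n => (x : ℕ)) this
    · intros; rfl
  -- the per-good target value
  set c : Fin m → ℝ := fun j => if ν j = 0 then Ψ (β j) j else Ψ (α j) j with hc
  -- pair-cluster lower bound helper
  have pairbound : ∀ (κ : Fin m → ℕ) (k a b : ℕ), a + 1 = b → (hb : b < n) →
      (∀ j, ν j = a → κ j = k) → (∀ j, ν j = b → κ j = k) →
      ∑ j ∈ univ.filter (fun j => ν j = b), Ψ (α j) j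
        ≤ secondmax (fun i => ∑ j ∈ univ.filter (fun j' => κ j' = k), Ψ i j) := by
    intro κ k a b hab hbn hka hkb
    have han : a < n := by omega
    set u := e ⟨a, han⟩ with hu
    set v := e ⟨b, hbn⟩ with hv
    have huv : u ≠ v := by
      simp only [hu, hv, ne_eq, EmbeddingLike.apply_eq_iff_eq, Fin.mk.injEq]
      omega
    have hsub : ∀ (l : ℕ) (i : Fin n), (∀ j, ν j = l → κ j = k) →
        (∀ j, ν j = l → α j = i) →
        ∑ j ∈ univ.filter (fun j => ν j = l), Ψ (α j) j
          ≤ ∑ j ∈ univ.filter (fun j' => κ j' = k), Ψ i j := by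
      intro l i hk hi
      have h1 : ∑ j ∈ univ.filter (fun j => ν j = l), Ψ (α j) j
          = ∑ j ∈ univ.filter (fun j => ν j = l), Ψ i j := by
        apply Finset.sum_congr rfl
        intro j hj
        rw [hi j (by simpa using hj)]
      rw [h1]
      apply Finset.sum_le_sum_of_subset_of_nonneg
      · intro j hj
        simp only [Finset.mem_filter, Finset.mem_univ, true_and] at hj ⊢
        exact hk j hj
      · intro j _ _
        exact hΨ i j
    have hαa : ∀ j, ν j = a → α j = u := by
      intro j hj
      rw [hα_eq j (hν_lt j)]
      congr 1
      exact Fin.ext hj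
    have hαb : ∀ j, ν j = b → α j = v := by
      intro j hj
      rw [hα_eq j (hν_lt j)]
      congr 1
      exact Fin.ext hj
    refine le_trans (le_min ?_ ?_) (min_le_secondmax_s11 _ huv)
    · calc ∑ j ∈ univ.filter (fun j => ν j = b), Ψ (α j) j = w v := hW b hbn
        _ ≤ w u := hanti _ _ (by simp [Fin.mk_le_mk]; omega)
        _ = ∑ j ∈ univ.filter (fun j => ν j = a), Ψ (α j) j := (hW a han).symm
        _ ≤ _ := hsub a u hka hαa
    · exact hsub b v hkb hαb
  -- the two keys
  set κ₁ : Fin m → ℕ := fun j => if ν j = 0 then 2*(j:ℕ)+1 else 2*((ν j + 1)/2) with hκ₁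
  set κ₂ : Fin m → ℕ := fun j => ν j / 2 with hκ₂
  obtain ⟨cl₁, hcl₁⟩ := cl_rev hn Ψ hΨ κ₁
  obtain ⟨cl₂, hcl₂⟩ := cl_rev hn Ψ hΨ κ₂
  have B2 : ∑ j ∈ univ.filter (fun j => ν j % 2 = 1), c j
      ≤ ∑ k ∈ (univ : Finset (Fin m)).image κ₂,
          secondmax (fun i => ∑ j ∈ univ.filter (fun j' => κ₂ j' = k), Ψ i j) := by
    rw [← Finset.sum_fiberwise_of_maps_to
      (t := (univ : Finset (Fin m)).image κ₂)
      (fun j _ => Finset.mem_image_of_mem κ₂ (mem_univ j)) c]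
    apply Finset.sum_le_sum
    intro k hk
    have hset : (univ.filter (fun j => ν j % 2 = 1)).filter (fun j => κ₂ j = k)
        = univ.filter (fun j => ν j = 2*k+1) := by
      rw [Finset.filter_filter]
      apply Finset.filter_congr
      intro j _
      simp only [hκ₂]
      omega
    rw [hset]
    have hcval : ∑ j ∈ univ.filter (fun j => ν j = 2*k+1), c j
        = ∑ j ∈ univ.filter (fun j => ν j = 2*k+1), Ψ (α j) j := by
      apply Finset.sum_congr rfl
      intro j hj
      simp only [Finset.mem_filter] at hj
      simp only [hc]
      rw [if_neg (by omega)]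
    rw [hcval]
    by_cases hfe : (univ.filter (fun j => ν j = 2*k+1)).Nonempty
    · obtain ⟨j₀, hj₀⟩ := hfe
      simp only [Finset.mem_filter, Finset.mem_univ, true_and] at hj₀
      have hbn : 2*k+1 < n := hj₀ ▸ hν_lt j₀
      exact pairbound κ₂ k (2*k) (2*k+1) rfl hbn
        (fun j hj => by simp only [hκ₂]; omega)
        (fun j hj => by simp only [hκ₂]; omega)
    · rw [Finset.not_nonempty_iff_eq_empty.mp hfe, Finset.sum_empty]
      exact secondmax_nonneg hn _ (fun i => Finset.sum_nonneg fun j _ => hΨ i j)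
  have B1 : ∑ j ∈ univ.filter (fun j => ν j % 2 = 0), c j
      ≤ ∑ k ∈ (univ : Finset (Fin m)).image κ₁,
          secondmax (fun i => ∑ j ∈ univ.filter (fun j' => κ₁ j' = k), Ψ i j) := by
    rw [← Finset.sum_fiberwise_of_maps_to
      (t := (univ : Finset (Fin m)).image κ₁)
      (fun j _ => Finset.mem_image_of_mem κ₁ (mem_univ j)) c]
    apply Finset.sum_le_sum
    intro k hk
    obtain ⟨j₁, _, hj₁⟩ := Finset.mem_image.mp hk
    by_cases h0 : ν j₁ = 0
    · -- singleton cluster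
      have hkval : k = 2*(j₁:ℕ)+1 := by rw [← hj₁]; simp [hκ₁, h0]
      have hfib : univ.filter (fun j' => κ₁ j' = k) = {j₁} := by
        ext j
        simp only [Finset.mem_filter, Finset.mem_univ, true_and, Finset.mem_singleton, hkval]
        constructor
        · intro hj
          by_cases hj0 : ν j = 0
          · simp only [hκ₁, if_pos hj0] at hj
            exact Fin.ext (by omega)
          · simp only [hκ₁, if_neg hj0] at hj
            omega
        · intro hj
          subst hj
          simp [hκ₁, h0]
      have hlhs : (univ.filter (fun j => ν j % 2 = 0)).filter (fun j => κ₁ j = k) = {j₁} := by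
        rw [Finset.filter_filter]
        rw [← hfib]
        apply Finset.filter_congr
        intro j _
        constructor
        · rintro ⟨_, h⟩; exact h
        · intro h
          refine ⟨?_, h⟩
          have : j = j₁ := by
            have := hfib ▸ (Finset.mem_filter.mpr ⟨mem_univ j, h⟩)
            simpa using this
          subst this
          omega
      rw [hlhs, hfib]
      simp only [Finset.sum_singleton]
      simp only [hc, if_pos h0]
      have hmin : min (Ψ (α j₁) j₁) (Ψ (β j₁) j₁) = Ψ (β j₁) j₁ :=
        min_eq_right (hα j₁ (β j₁))
      calc Ψ (β j₁) j₁ = min (Ψ (α j₁) j₁) (Ψ (β j₁) j₁) := hmin.symm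
        _ ≤ secondmax (fun i => Ψ i j₁) := min_le_secondmax_s11 (fun i => Ψ i j₁) (Ne.symm (hβne j₁))
    · -- pair cluster
      set g : ℕ := (ν j₁ + 1)/2 with hg
      have hg1 : 1 ≤ g := by simp only [hg]; omega
      have hkval : k = 2*g := by rw [← hj₁]; simp [hκ₁, h0, hg]
      have hlhs : (univ.filter (fun j => ν j % 2 = 0)).filter (fun j => κ₁ j = k)
          = univ.filter (fun j => ν j = 2*g) := by
        rw [Finset.filter_filter]
        apply Finset.filter_congr
        intro j _
        simp only [hkval]
        constructor
        · rintro ⟨hev, hkj⟩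
          by_cases hj0 : ν j = 0
          · simp only [hκ₁, if_pos hj0] at hkj
            omega
          · simp only [hκ₁, if_neg hj0] at hkj
            omega
        · intro hj
          have hj0 : ν j ≠ 0 := by omega
          refine ⟨by omega, ?_⟩
          simp only [hκ₁, if_neg hj0]
          omega
      rw [hlhs]
      have hcval : ∑ j ∈ univ.filter (fun j => ν j = 2*g), c j
          = ∑ j ∈ univ.filter (fun j => ν j = 2*g), Ψ (α j) j := by
        apply Finset.sum_congr rfl
        intro j hj
        simp only [Finset.mem_filter] at hj
        simp only [hc]
        rw [if_neg (by omega)]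
      rw [hcval]
      by_cases hfe : (univ.filter (fun j => ν j = 2*g)).Nonempty
      · obtain ⟨j₀, hj₀⟩ := hfe
        simp only [Finset.mem_filter, Finset.mem_univ, true_and] at hj₀
        have hbn : 2*g < n := hj₀ ▸ hν_lt j₀
        refine pairbound κ₁ k (2*g-1) (2*g) (by omega) hbn ?_ ?_
        · intro j hj
          have hj0 : ν j ≠ 0 := by omega
          simp only [hκ₁, if_neg hj0, hkval]
          omega
        · intro j hj
          have hj0 : ν j ≠ 0 := by omega
          simp only [hκ₁, if_neg hj0, hkval]
          omega
      · rw [Finset.not_nonempty_iff_eq_empty.mp hfe, Finset.sum_empty]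
        exact secondmax_nonneg hn _ (fun i => Finset.sum_nonneg fun j _ => hΨ i j)
  -- upper bound for signaling schemes
  have hupper : ∀ i, i ≠ e ⟨0, by omega⟩ → ∀ j, Ψ i j ≤ c j := by
    intro i hi j
    by_cases h0 : ν j = 0
    · simp only [hc, if_pos h0]
      apply hβ j i
      intro hcon
      apply hi
      rw [hcon, hα_eq j (hν_lt j)]
      congr 1
      exact Fin.ext h0
    · simp only [hc, if_neg h0]
      exact hα j i
  have hsplit : ∑ j, c j = ∑ j ∈ univ.filter (fun j => ν j % 2 = 0), c j
      + ∑ j ∈ univ.filter (fun j => ν j % 2 = 1), c j := by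
    rw [← Finset.sum_filter_add_sum_filter_not univ (fun j => ν j % 2 = 0) c]
    congr 1
    exact Finset.sum_congr (Finset.filter_congr (fun j _ => by omega)) (fun _ _ => rfl)
  set Rc₁ := Rev Ψ (fun σ j => if cl₁ j = σ then (1:ℝ) else 0) with hRc₁
  set Rc₂ := Rev Ψ (fun σ j => if cl₂ j = σ then (1:ℝ) else 0) with hRc₂
  have hsum : ∀ (s : ℕ) (φ : Fin s → Fin m → ℝ), IsScheme φ → Rev Ψ φ ≤ Rc₁ + Rc₂ := by
    intro s φ hφ
    calc Rev Ψ φ ≤ ∑ j, c j := rev_le hn Ψ _ c hupper s φ hφ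
      _ = _ + _ := hsplit
      _ ≤ Rc₁ + Rc₂ := add_le_add (le_trans B1 hcl₁) (le_trans B2 hcl₂)
  by_cases hch : Rc₁ ≤ Rc₂
  · exact ⟨cl₂, fun s φ hφ => le_trans (hsum s φ hφ) (by rw [← hRc₂]; linarith)⟩
  · exact ⟨cl₁, fun s φ hφ => le_trans (hsum s φ hφ) (by rw [← hRc₁]; linarith)⟩
end

section
/- The number of distinct regions with non-empty interior defined by t ≥ m hyperplanes through arbitrary positions in ℝ^m is at most the Whitney number W(m,t) = ∑_{i=0}^{m} C(t,i). -/
open Finset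

/-- Key geometric fact: the family of realizable sign patterns of `t` affine functionals on
`ℝ^m` shatters no set of `m+1` indices. -/
lemma no_shatter_aux {m t : ℕ} (a : Fin t → Fin m → ℝ) (b : Fin t → ℝ)
    (𝒜 : Finset (Finset (Fin t)))
    (h𝒜 : ∀ A ∈ 𝒜, ∃ x : Fin m → ℝ, ∀ r,
      if r ∈ A then b r < ∑ j, a r j * x j else ∑ j, a r j * x j < b r)
    (s : Finset (Fin t)) (hs : s.card = m + 1) : ¬ 𝒜.Shatters s := by
  classical
  intro hsh
  -- the linear evaluation map into ℝ^s
  let L : (Fin m → ℝ) →ₗ[ℝ] (↥s → ℝ) :=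
    { toFun := fun x i => ∑ j, a i j * x j
      map_add' := by
        intro x y; funext i
        simp [mul_add, Finset.sum_add_distrib]
      map_smul' := by
        intro c x; funext i
        simp [Finset.mul_sum, mul_left_comm] }
  have hrank : LinearMap.range L < ⊤ := by
    rw [lt_top_iff_ne_top]
    intro htop
    have h1 : Module.finrank ℝ (LinearMap.range L) ≤ m := by
      have := LinearMap.finrank_range_le L
      simpa using this
    have h2 : Module.finrank ℝ (LinearMap.range L) = m + 1 := by
      rw [htop, finrank_top]
      simp [Module.finrank_pi, Fintype.card_coe, hs]
    omega
  obtain ⟨φ, hφ0, hφ⟩ :=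
    Submodule.exists_dual_map_eq_bot_of_lt_top hrank inferInstance
  -- coordinates of φ
  let c : ↥s → ℝ := fun i => φ (fun j => if i = j then 1 else 0)
  have hφy : ∀ y : ↥s → ℝ, φ y = ∑ i, y i * c i := by
    intro y
    conv_lhs => rw [pi_eq_sum_univ y]
    rw [map_sum]
    refine Finset.sum_congr rfl fun i _ => ?_
    rw [map_smul]
    simp [c, mul_comm]
  have hLker : ∀ x, φ (L x) = 0 := by
    intro x
    have hmem : φ (L x) ∈ Submodule.map φ (LinearMap.range L) :=
      ⟨L x, ⟨x, rfl⟩, rfl⟩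
    rw [hφ] at hmem
    simpa using hmem
  -- the constant d
  set d : ℝ := - φ (fun i => b i) with hd
  have hT : ∀ x : Fin m → ℝ,
      ∑ i : ↥s, ((∑ j, a i j * x j) - b i) * c i = d := by
    intro x
    have hfun : ((fun i : ↥s => (∑ j, a i j * x j) - b i))
        = L x - (fun i : ↥s => b ↑i) := by
      funext i; simp [L]
    rw [← hφy, hfun, map_sub, hLker, hd, zero_sub]
  -- a nonzero coordinate
  have hcne : ∃ i0, c i0 ≠ 0 := by
    by_contra hc
    push_neg at hc
    apply hφ0
    apply LinearMap.ext
    intro y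
    rw [hφy]
    simp [hc]
  obtain ⟨i0, hi0⟩ := hcne
  -- extended coordinates
  let c' : Fin t → ℝ := fun r => if h : r ∈ s then c ⟨r, h⟩ else 0
  have hc' : ∀ i : ↥s, c' (i : Fin t) = c i := by
    intro i; simp only [c', dif_pos i.2]
  -- for a sign σ = ±1, realizing the pattern {r ∈ s | 0 < σ * c' r} forces 0 < σ * d
  have main : ∀ σ : ℝ, σ = 1 ∨ σ = -1 → 0 < σ * d := by
    intro σ hσ
    have hσne : σ ≠ 0 := by rcases hσ with h | h <;> rw [h] <;> norm_num
    obtain ⟨A, hAA, hA⟩ := hsh (t := s.filter (fun r => 0 < σ * c' r)) (filter_subset _ _)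
    obtain ⟨x, hx⟩ := h𝒜 A hAA
    have hiff : ∀ i : ↥s, ((i : Fin t) ∈ A ↔ 0 < σ * c' (i : Fin t)) := by
      intro i
      constructor
      · intro hiA
        have : (i : Fin t) ∈ s ∩ A := mem_inter.2 ⟨i.2, hiA⟩
        rw [hA, mem_filter] at this
        exact this.2
      · intro hpos
        have : (i : Fin t) ∈ s ∩ A := by
          rw [hA, mem_filter]; exact ⟨i.2, hpos⟩
        exact (mem_inter.1 this).2
    have key : ∀ i : ↥s,
        0 ≤ σ * (((∑ j, a i j * x j) - b i) * c i) ∧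
        (c i ≠ 0 → 0 < σ * (((∑ j, a i j * x j) - b i) * c i)) := by
      intro i
      have hxi := hx (i : Fin t)
      rcases lt_trichotomy (σ * c' (i : Fin t)) 0 with hneg | hzero | hpos
      · have hnA : (i : Fin t) ∉ A := fun h => absurd ((hiff i).1 h) (by linarith)
        rw [if_neg hnA] at hxi
        have hy : (∑ j, a i j * x j) - b i < 0 := by linarith
        rw [← hc' i] at *
        constructor
        · nlinarith
        · intro _; nlinarith
      · have hcz : c i = 0 := by
          rw [← hc' i]
          rcases mul_eq_zero.1 hzero with h | h
          · exact absurd h hσne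
          · exact h
        rw [hcz, mul_zero, mul_zero]
        exact ⟨le_refl _, fun h => absurd rfl h⟩
      · have hA' : (i : Fin t) ∈ A := (hiff i).2 hpos
        rw [if_pos hA'] at hxi
        have hy : 0 < (∑ j, a i j * x j) - b i := by linarith
        rw [← hc' i] at *
        constructor
        · nlinarith
        · intro _; nlinarith
    have : 0 < ∑ i : ↥s, σ * (((∑ j, a i j * x j) - b i) * c i) := by
      apply Finset.sum_pos'
      · exact fun i _ => (key i).1
      · exact ⟨i0, mem_univ _, (key i0).2 hi0⟩
    rw [← Finset.mul_sum, hT x] at this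
    exact this
  have h1 := main 1 (Or.inl rfl)
  have h2 := main (-1) (Or.inr rfl)
  rw [one_mul] at h1
  rw [neg_one_mul] at h2
  linarith

/-- The number of (open) regions cut out by `t ≥ m` hyperplanes in `ℝ^m` is at most the
Whitney number `∑_{i=0}^m C(t,i)`: regions are encoded by realizable sign vectors. -/
theorem stmt13 {m t : ℕ} (hmt : m ≤ t)
    (a : Fin t → Fin m → ℝ) (b : Fin t → ℝ) (ha : ∀ r, a r ≠ 0) :
    Set.ncard {ε : Fin t → Bool |
        ∃ x : Fin m → ℝ, ∀ r,
          if ε r then b r < ∑ j, a r j * x j else ∑ j, a r j * x j < b r}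
      ≤ ∑ i ∈ Finset.range (m + 1), Nat.choose t i := by
  classical
  set S := {ε : Fin t → Bool |
        ∃ x : Fin m → ℝ, ∀ r,
          if ε r then b r < ∑ j, a r j * x j else ∑ j, a r j * x j < b r} with hS
  have hfin : S.Finite := Set.toFinite _
  set F : (Fin t → Bool) → Finset (Fin t) :=
    fun ε => Finset.univ.filter (fun r => ε r = true) with hF
  have hFinj : Function.Injective F := by
    intro ε1 ε2 h
    funext r
    have : (r ∈ F ε1) ↔ (r ∈ F ε2) := by rw [h]
    simpa [hF, Finset.mem_filter] using this
  set 𝒜 : Finset (Finset (Fin t)) := hfin.toFinset.image F with h𝒜def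
  have hcard : S.ncard = 𝒜.card := by
    rw [Set.ncard_eq_toFinset_card S hfin, h𝒜def,
      Finset.card_image_of_injective _ hFinj]
  have h𝒜 : ∀ A ∈ 𝒜, ∃ x : Fin m → ℝ, ∀ r,
      if r ∈ A then b r < ∑ j, a r j * x j else ∑ j, a r j * x j < b r := by
    intro A hA
    rw [h𝒜def, Finset.mem_image] at hA
    obtain ⟨ε, hε, rfl⟩ := hA
    rw [Set.Finite.mem_toFinset] at hε
    obtain ⟨x, hx⟩ := hε
    refine ⟨x, fun r => ?_⟩
    have hmem : (r ∈ F ε) ↔ ε r = true := by simp [hF]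
    by_cases h : ε r
    · rw [if_pos (hmem.2 h)]
      simpa [h] using hx r
    · rw [if_neg (fun hc => h (hmem.1 hc))]
      have : ε r = false := by simpa using h
      simpa [this] using hx r
  have hvc : 𝒜.vcDim ≤ m := by
    apply Finset.sup_le
    intro s hs
    rw [Finset.mem_shatterer] at hs
    by_contra hcard'
    push_neg at hcard'
    obtain ⟨s', hs's, hs'⟩ := Finset.exists_subset_card_eq hcard'
    exact no_shatter_aux a b 𝒜 h𝒜 s' hs' (hs.mono_right hs's)
  calc S.ncard = 𝒜.card := hcard
    _ ≤ 𝒜.shatterer.card := Finset.card_le_card_shatterer 𝒜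
    _ ≤ ∑ k ∈ Finset.Iic 𝒜.vcDim, (Fintype.card (Fin t)).choose k :=
        Finset.card_shatterer_le_sum_vcDim
    _ ≤ ∑ i ∈ Finset.range (m + 1), Nat.choose t i := by
        rw [Fintype.card_fin]
        apply Finset.sum_le_sum_of_subset
        intro k hk
        rw [Finset.mem_Iic] at hk
        rw [Finset.mem_range]
        omega
end

section
/- In the MAX-CUT reduction instance, the two-signal scheme induced by a cut achieves revenue 2K₁ + (n−2)K₂ + m + C, where C is the number of edges crossing the cut. Formally: let G=(V,E) be a graph with |V|=n, distinguished vertices x,y ∈ V, and let X ⊆ V with x ∈ X, y ∉ X. Define the signaling scheme φ with two signals σ_x, σ_y by φ(σ_x,u)=1 if u∈X else 0, and φ(σ_y,u)=1−φ(σ_x,u). With the weighted valuations Φ_ℓ(i,u) defined in the reduction (three bidders, Bayesian outcomes ℓ with weights K₁, K₂, 1 as specified), ∑_ℓ ∑_{σ∈{σ_x,σ_y}} secondmax_{i∈{1,2,3}} ∑_{u∈V} Φ_ℓ(i,u)·φ(σ,u) = 2K₁ + (n−2)K₂ + m + |∂X|, where ∂X is the set of edges with exactly one endpoint in X. -/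
/-!
Every outcome is evaluated separately, and for each signal two of the three bidders value it
equally, so the second-highest value is that common value (for an edge between distinct vertices
the values are `a, b, a + b` with `a, b ≥ 0`, whose middle one is `max a b`). Outcome (a) yields
`K₁` under each signal; the two outcomes of a vertex `w ∉ {x, y}` yield `K₂` together, from the
signal of the side of the cut containing `w`; an edge yields `1`, plus `1` more exactly when it
crosses the cut.
-/

open Finset

/-- Vertices of `V ∖ {x,y}`. -/
def Others {n : ℕ} (x y : Fin n) : Finset (Fin n) := (Finset.univ.erase x).erase y

/-- The weighted valuation matrices `Φ_ℓ` of the MAX-CUT reduction: outcome type (a)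
with weight `K₁`, types (b),(c) per vertex `u ∉ {x,y}` with weight `K₂`, and type (d)
per edge with weight `1`. -/
noncomputable def Phi {n : ℕ} (K₁ K₂ : ℝ) (x y : Fin n) (E : Finset (Fin n × Fin n)) :
    (Unit ⊕ (↥(Others x y) ⊕ (↥(Others x y) ⊕ ↥E))) → Fin 3 → Fin n → ℝ
  | Sum.inl _ => fun i u =>
      if i = 0 then (if u = x then K₁ else 0)
      else if i = 1 then (if u = y then K₁ else 0)
      else (if u = x ∨ u = y then K₁ else 0)
  | Sum.inr (Sum.inl w) => fun i u =>
      if i = 0 then (if u = x then K₂ else 0)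
      else if i = 1 then (if u = (w : Fin n) then K₂ else 0)
      else 0
  | Sum.inr (Sum.inr (Sum.inl w)) => fun i u =>
      if i = 0 then (if u = y then K₂ else 0)
      else if i = 1 then (if u = (w : Fin n) then K₂ else 0)
      else 0
  | Sum.inr (Sum.inr (Sum.inr e)) => fun i u =>
      if i = 0 then (if u = (e : Fin n × Fin n).1 then 1 else 0)
      else if i = 1 then (if u = (e : Fin n × Fin n).2 then 1 else 0)
      else (if u = (e : Fin n × Fin n).1 ∨ u = (e : Fin n × Fin n).2 then 1 else 0)

lemma secondmax_fin_three (f : Fin 3 → ℝ) :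
    secondmax f = max (min (f 0) (f 1)) (max (min (f 0) (f 2)) (min (f 1) (f 2))) := by
  have hpairs : {v | ∃ i j : Fin 3, i ≠ j ∧ v = min (f i) (f j)} =
      {min (f 0) (f 1), min (f 0) (f 2), min (f 1) (f 2)} := by
    ext v
    simp only [Set.mem_ofPred_eq, Set.mem_insert_iff, Set.mem_singleton_iff]
    constructor
    · rintro ⟨i, j, hij, rfl⟩
      fin_cases i <;> fin_cases j <;>
        simp_all [min_comm (f 1) (f 0), min_comm (f 2) (f 0), min_comm (f 2) (f 1)]
    · rintro (rfl | rfl | rfl)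
      exacts [⟨0, 1, by decide, rfl⟩, ⟨0, 2, by decide, rfl⟩, ⟨1, 2, by decide, rfl⟩]
  rw [secondmax, hpairs, csSup_insert (Set.toFinite _).bddAbove (by simp),
    csSup_insert (Set.toFinite _).bddAbove (by simp), csSup_singleton]

lemma secondmax_fin_three_of_eq {f : Fin 3 → ℝ} {i j : Fin 3} (hij : i ≠ j) (h : f i = f j) :
    secondmax f = f i := by
  rw [secondmax_fin_three]
  fin_cases i <;> fin_cases j <;> simp_all

lemma secondmax_vecCons_add {a b : ℝ} (ha : 0 ≤ a) (hb : 0 ≤ b) :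
    secondmax ![a, b, a + b] = max a b := by
  rw [secondmax_fin_three]
  rcases le_total a b with hab | hab <;> simp [hab, ha, hb]

lemma Fintype.sum_ite_eq_or_eq {α M : Type*} [Fintype α] [DecidableEq α] [AddCommMonoid M]
    {a b : α} (hab : a ≠ b) (f : α → M) :
    ∑ u, (if u = a ∨ u = b then f u else 0) = f a + f b := by
  have hpair : univ.filter (fun u => u = a ∨ u = b) = {a, b} := by ext; simp
  rw [← sum_filter, hpair, sum_pair hab]

/-- The signal `true` is `σ_x`, sent for the vertices of `X`. -/
def cutScheme {n : ℕ} (X : Finset (Fin n)) (s : Bool) (u : Fin n) : ℝ :=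
  if s then (if u ∈ X then 1 else 0) else (if u ∈ X then 0 else 1)

lemma isScheme_cutScheme {n : ℕ} (X : Finset (Fin n)) : IsScheme (cutScheme X) := by
  refine ⟨fun s u => ?_, fun u => ?_⟩ <;> unfold cutScheme
  · split_ifs <;> norm_num
  · by_cases hu : u ∈ X <;> simp [hu]

lemma card_others_add_two {n : ℕ} {x y : Fin n} (hxy : x ≠ y) : #(Others x y) + 2 = n := by
  have hy := card_erase_add_one (mem_erase.2 ⟨hxy.symm, mem_univ y⟩)
  have hx := card_erase_add_one (mem_univ x)
  rw [card_univ, Fintype.card_fin] at hx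
  unfold Others
  omega

section Bidders

variable {n : ℕ} {K₁ K₂ : ℝ} {x y : Fin n} {E : Finset (Fin n × Fin n)} (g : Fin n → ℝ)

lemma sum_phi_inl_mul (hxy : x ≠ y) (l : Unit) :
    (fun i => ∑ u, Phi K₁ K₂ x y E (.inl l) i u * g u)
      = ![K₁ * g x, K₁ * g y, K₁ * (g x + g y)] := by
  ext i
  fin_cases i <;> simp [Phi, Fintype.sum_ite_eq_or_eq hxy, mul_add]

lemma sum_phi_inr_inl_mul (w : Others x y) :
    (fun i => ∑ u, Phi K₁ K₂ x y E (.inr (.inl w)) i u * g u) = ![K₂ * g x, K₂ * g w, 0] := by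
  ext i
  fin_cases i <;> simp [Phi]

lemma sum_phi_inr_inr_inl_mul (w : Others x y) :
    (fun i => ∑ u, Phi K₁ K₂ x y E (.inr (.inr (.inl w))) i u * g u)
      = ![K₂ * g y, K₂ * g w, 0] := by
  ext i
  fin_cases i <;> simp [Phi]

lemma sum_phi_inr_inr_inr_mul (e : E) (he : e.1.1 ≠ e.1.2) :
    (fun i => ∑ u, Phi K₁ K₂ x y E (.inr (.inr (.inr e))) i u * g u)
      = ![g e.1.1, g e.1.2, g e.1.1 + g e.1.2] := by
  ext i
  fin_cases i <;> simp [Phi, Fintype.sum_ite_eq_or_eq he]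

end Bidders

section Revenue

variable {n : ℕ} {K₁ K₂ : ℝ} {x y : Fin n} {E : Finset (Fin n × Fin n)} {X : Finset (Fin n)}

lemma sum_secondmax_phi_inl (hx : x ∈ X) (hy : y ∉ X) (l : Unit) :
    ∑ s : Bool, secondmax (fun i => ∑ u, Phi K₁ K₂ x y E (.inl l) i u * cutScheme X s u)
      = 2 * K₁ := by
  simp only [Fintype.sum_bool, sum_phi_inl_mul _ (ne_of_mem_of_not_mem hx hy)]
  rw [secondmax_fin_three_of_eq (i := 0) (j := 2) (by decide),
    secondmax_fin_three_of_eq (i := 1) (j := 2) (by decide)]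
  all_goals simp [cutScheme, hx, hy, two_mul]

lemma sum_secondmax_phi_inr_inl (hx : x ∈ X) (w : Others x y) :
    ∑ s : Bool,
      secondmax (fun i => ∑ u, Phi K₁ K₂ x y E (.inr (.inl w)) i u * cutScheme X s u)
      = K₂ * cutScheme X true w := by
  simp only [Fintype.sum_bool, sum_phi_inr_inl_mul]
  by_cases hw : (w : Fin n) ∈ X
  · rw [secondmax_fin_three_of_eq (i := 0) (j := 1) (by decide),
      secondmax_fin_three_of_eq (i := 0) (j := 1) (by decide)]
    all_goals simp [cutScheme, hx, hw]
  · rw [secondmax_fin_three_of_eq (i := 1) (j := 2) (by decide),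
      secondmax_fin_three_of_eq (i := 0) (j := 2) (by decide)]
    all_goals simp [cutScheme, hx, hw]

lemma sum_secondmax_phi_inr_inr_inl (hy : y ∉ X) (w : Others x y) :
    ∑ s : Bool,
      secondmax (fun i => ∑ u, Phi K₁ K₂ x y E (.inr (.inr (.inl w))) i u * cutScheme X s u)
      = K₂ * cutScheme X false w := by
  simp only [Fintype.sum_bool, sum_phi_inr_inr_inl_mul]
  by_cases hw : (w : Fin n) ∈ X
  · rw [secondmax_fin_three_of_eq (i := 0) (j := 2) (by decide),
      secondmax_fin_three_of_eq (i := 1) (j := 2) (by decide)]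
    all_goals simp [cutScheme, hy, hw]
  · rw [secondmax_fin_three_of_eq (i := 0) (j := 2) (by decide),
      secondmax_fin_three_of_eq (i := 0) (j := 1) (by decide)]
    all_goals simp [cutScheme, hy, hw]

lemma secondmax_phi_inr_inr_inr (e : E) (s : Bool) :
    secondmax (fun i => ∑ u, Phi K₁ K₂ x y E (.inr (.inr (.inr e))) i u * cutScheme X s u)
      = max (cutScheme X s e.1.1) (cutScheme X s e.1.2) := by
  by_cases he : e.1.1 = e.1.2
  · rw [secondmax_fin_three_of_eq (i := 0) (j := 1) (by decide)] <;> simp [Phi, he]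
  · have hφ := (isScheme_cutScheme X).1 s
    rw [sum_phi_inr_inr_inr_mul _ _ he, secondmax_vecCons_add (hφ _) (hφ _)]

lemma sum_secondmax_phi_inr_inr_inr (e : E) :
    ∑ s : Bool,
      secondmax (fun i => ∑ u, Phi K₁ K₂ x y E (.inr (.inr (.inr e))) i u * cutScheme X s u)
      = 1 + if (e.1.1 ∈ X ∧ e.1.2 ∉ X) ∨ (e.1.1 ∉ X ∧ e.1.2 ∈ X) then 1 else 0 := by
  simp only [Fintype.sum_bool, secondmax_phi_inr_inr_inr]
  by_cases h₁ : e.1.1 ∈ X <;> by_cases h₂ : e.1.2 ∈ X <;> norm_num [cutScheme, h₁, h₂]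

end Revenue

theorem stmt14_general {n : ℕ} (K₁ K₂ : ℝ)
    (x y : Fin n)
    (E : Finset (Fin n × Fin n))
    (X : Finset (Fin n)) (hx : x ∈ X) (hy : y ∉ X) :
    ∑ ℓ, ∑ s : Bool, secondmax (fun i : Fin 3 =>
        ∑ u, Phi K₁ K₂ x y E ℓ i u *
          (if s then (if u ∈ X then (1 : ℝ) else 0) else (if u ∈ X then 0 else 1)))
      = 2 * K₁ + ((n : ℝ) - 2) * K₂ + (E.card : ℝ) +
        ((E.filter (fun e => (e.1 ∈ X ∧ e.2 ∉ X) ∨ (e.1 ∉ X ∧ e.2 ∈ X))).card : ℝ) := by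
  change ∑ ℓ, ∑ s : Bool,
    secondmax (fun i => ∑ u, Phi K₁ K₂ x y E ℓ i u * cutScheme X s u) = _
  simp only [Fintype.sum_sum_type, Fintype.sum_unique, sum_secondmax_phi_inl hx hy,
    sum_secondmax_phi_inr_inl hx, sum_secondmax_phi_inr_inr_inl hy,
    sum_secondmax_phi_inr_inr_inr]
  have hvertices : ∑ w : Others x y, K₂ * cutScheme X true w
      + ∑ w : Others x y, K₂ * cutScheme X false w = ((n : ℝ) - 2) * K₂ := by
    have hscheme (u : Fin n) : cutScheme X true u + cutScheme X false u = 1 := by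
      simpa using (isScheme_cutScheme X).2 u
    have hcard : (#(Others x y) : ℝ) + 2 = n := by
      exact_mod_cast card_others_add_two (ne_of_mem_of_not_mem hx hy)
    simp only [← sum_add_distrib, ← mul_add, hscheme, mul_one, sum_const, card_univ,
      Fintype.card_coe, nsmul_eq_mul, ← hcard, add_sub_cancel_right]
  have hedges :
      ∑ e : E, (1 + if (e.1.1 ∈ X ∧ e.1.2 ∉ X) ∨ (e.1.1 ∉ X ∧ e.1.2 ∈ X) then 1 else 0)
      = (#E : ℝ) + #(E.filter (fun e => (e.1 ∈ X ∧ e.2 ∉ X) ∨ (e.1 ∉ X ∧ e.2 ∈ X))) := by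
    rw [sum_coe_sort E
        (fun e => 1 + if (e.1 ∈ X ∧ e.2 ∉ X) ∨ (e.1 ∉ X ∧ e.2 ∈ X) then 1 else 0),
      sum_add_distrib, sum_boole, sum_const, nsmul_one]
  linarith

/-- In the MAX-CUT reduction, the two-signal scheme induced by a cut `X` (with `x ∈ X`,
`y ∉ X`) achieves revenue `2K₁ + (n-2)K₂ + |E| + |∂X|`. -/
theorem stmt14 {n : ℕ} (hn : 2 ≤ n) (K₁ K₂ : ℝ) (hK₁ : 0 ≤ K₁) (hK₂ : 0 ≤ K₂)
    (x y : Fin n) (hxy : x ≠ y)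
    (E : Finset (Fin n × Fin n)) (hE : ∀ e ∈ E, e.1 ≠ e.2)
    (X : Finset (Fin n)) (hx : x ∈ X) (hy : y ∉ X) :
    ∑ ℓ, ∑ s : Bool, secondmax (fun i : Fin 3 =>
        ∑ u, Phi K₁ K₂ x y E ℓ i u *
          (if s then (if u ∈ X then (1 : ℝ) else 0) else (if u ∈ X then 0 else 1)))
      = 2 * K₁ + ((n : ℝ) - 2) * K₂ + (E.card : ℝ) +
        ((E.filter (fun e => (e.1 ∈ X ∧ e.2 ∉ X) ∨ (e.1 ∉ X ∧ e.2 ∈ X))).card : ℝ) :=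
  stmt14_general K₁ K₂ x y E X hx hy
end

section
/- Consider the KPSA with n bidders and m = n(n−1) items, each chosen with probability 1/m: for each ordered pair (i,i') of distinct bidders there is an item I_{i,i'} with V(i, I_{i,i'}) = 1, V(i', I_{i,i'}) = 1/2, and 0 for all other bidders. The signaling scheme with C(n,2) signals, emitting σ_{i,i'} (for unordered pair {i,i'}) when either I_{i,i'} or I_{i',i} is chosen, achieves revenue 3/4. -/
open Finset

/-!
Merging `I_{i,i'}` with `I_{i',i}` is a deterministic scheme: each item is sent to the
signal of its unordered pair `{i, i'}`. Conditioned on that signal, exactly the two bidders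
`i` and `i'` have positive value, and both value it at `1/m + 1/(2m) = 3/(2m)`, so the second
highest value equals the highest one. Summing over the `C(n, 2) = m/2` signals gives `3/4`.
-/

lemma secondmax_eq_of_forall_le {ι : Type*} [Fintype ι] {f : ι → ℝ} {c : ℝ} {a b : ι}
    (hab : a ≠ b) (ha : f a = c) (hb : f b = c) (hle : ∀ i, f i ≤ c) :
    secondmax f = c := by
  refine IsGreatest.csSup_eq ⟨⟨a, b, hab, by rw [ha, hb, min_self]⟩, ?_⟩
  rintro x ⟨i, j, -, rfl⟩
  exact (min_le_left _ _).trans (hle i)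

section DeterministicScheme

variable {S J : Type*} [Fintype S] [DecidableEq S]

lemma isScheme_ite_eq (f : J → S) : IsScheme (fun σ j => if f j = σ then (1 : ℝ) else 0) :=
  ⟨fun _ _ => by positivity, fun j => by simp⟩

lemma rev_ite_eq [Fintype J] {n : ℕ} (Ψ : Fin n → J → ℝ) (f : J → S) :
    Rev Ψ (fun σ j => if f j = σ then (1 : ℝ) else 0) =
      ∑ σ, secondmax (fun i => ∑ j with f j = σ, Ψ i j) := by
  simp only [Rev, ite_mul, one_mul, zero_mul, sum_filter]

end DeterministicScheme

section UnorderedPairs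

variable {α : Type*} [LinearOrder α]

def sortPair (I : {p : α × α // p.1 ≠ p.2}) : {p : α × α // p.1 < p.2} :=
  ⟨(min I.1.1 I.1.2, max I.1.1 I.1.2), min_lt_max.2 I.2⟩

lemma sortPair_eq_iff {I : {p : α × α // p.1 ≠ p.2}} {σ : {p : α × α // p.1 < p.2}} :
    sortPair I = σ ↔ I.1 = σ.1 ∨ I.1 = (σ.1.2, σ.1.1) := by
  obtain ⟨⟨x, y⟩, hxy⟩ := I
  obtain ⟨⟨a, b⟩, hab⟩ := σ
  simp only [sortPair, Subtype.mk.injEq, Prod.mk.injEq]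
  grind

lemma filter_sortPair_eq [Fintype α] (σ : {p : α × α // p.1 < p.2}) :
    ({I | sortPair I = σ} : Finset {p : α × α // p.1 ≠ p.2}) =
      {⟨σ.1, σ.2.ne⟩, ⟨(σ.1.2, σ.1.1), σ.2.ne'⟩} := by
  ext I
  rw [mem_filter_univ, sortPair_eq_iff]
  simp [Subtype.ext_iff]

lemma card_lt_pairs [Fintype α] :
    Fintype.card {p : α × α // p.1 < p.2} = (Fintype.card α).choose 2 := by
  rw [Fintype.card_subtype, ← univ_product_univ, card_product_filter_lt, card_univ]

end UnorderedPairs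

section PairValuation

variable {α : Type*} [DecidableEq α]

def pairValuation (hi lo : ℝ) (k : α) (I : {p : α × α // p.1 ≠ p.2}) : ℝ :=
  if k = I.1.1 then hi else if k = I.1.2 then lo else 0

lemma pairValuation_add_swap (hi lo : ℝ) {a b : α} (hab : a ≠ b) (k : α) :
    pairValuation hi lo k ⟨(a, b), hab⟩ + pairValuation hi lo k ⟨(b, a), hab.symm⟩ =
      if k = a ∨ k = b then hi + lo else 0 := by
  unfold pairValuation
  by_cases ha : k = a
  · subst ha; simp [hab]
  by_cases hb : k = b
  · subst hb; simp [hab.symm, add_comm]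
  simp [ha, hb]

end PairValuation

lemma rev_pairValuation_sortPair {n : ℕ} {hi lo : ℝ} (h : 0 ≤ hi + lo) :
    Rev (pairValuation (α := Fin n) hi lo) (fun σ I => if sortPair I = σ then (1 : ℝ) else 0) =
      (n.choose 2 : ℝ) * (hi + lo) := by
  have hsignal : ∀ σ : {p : Fin n × Fin n // p.1 < p.2},
      secondmax (fun k => ∑ I with sortPair I = σ, pairValuation hi lo k I) = hi + lo := by
    rintro ⟨⟨a, b⟩, hab⟩
    have hval (k : Fin n) : ∑ I with sortPair I = ⟨(a, b), hab⟩, pairValuation hi lo k I =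
        if k = a ∨ k = b then hi + lo else 0 := by
      have hne : (⟨(a, b), hab.ne⟩ : {p : Fin n × Fin n // p.1 ≠ p.2}) ≠ ⟨(b, a), hab.ne'⟩ := by
        simp [hab.ne]
      rw [filter_sortPair_eq, sum_pair hne, pairValuation_add_swap]
    refine secondmax_eq_of_forall_le hab.ne (by simp [hval]) (by simp [hval]) fun k => ?_
    rw [hval]
    split_ifs
    exacts [le_rfl, h]
  rw [rev_ite_eq, Fintype.sum_congr _ _ hsignal, sum_const, card_univ, card_lt_pairs,
    Fintype.card_fin, nsmul_eq_mul]

/-- The KPSA with `n(n-1)` items indexed by ordered pairs `(i,i')`, where bidder `i`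
values `I_{i,i'}` at `1` and bidder `i'` at `1/2` (normalized by `1/(n(n-1))`): the
scheme with `C(n,2)` signals merging `I_{i,i'}` with `I_{i',i}` is valid with revenue `3/4`. -/
theorem stmt18 {n : ℕ} (hn : 2 ≤ n) :
    IsScheme (fun (σ : {p : Fin n × Fin n // p.1 < p.2})
        (I : {p : Fin n × Fin n // p.1 ≠ p.2}) =>
      if I.1 = σ.1 ∨ I.1 = (σ.1.2, σ.1.1) then (1 : ℝ) else 0) ∧
    Rev (fun (i : Fin n) (I : {p : Fin n × Fin n // p.1 ≠ p.2}) =>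
        if i = I.1.1 then 1 / ((n : ℝ) * ((n : ℝ) - 1))
        else if i = I.1.2 then 1 / (2 * ((n : ℝ) * ((n : ℝ) - 1))) else 0)
      (fun (σ : {p : Fin n × Fin n // p.1 < p.2})
          (I : {p : Fin n × Fin n // p.1 ≠ p.2}) =>
        if I.1 = σ.1 ∨ I.1 = (σ.1.2, σ.1.1) then (1 : ℝ) else 0)
      = 3 / 4 := by
  simp only [← sortPair_eq_iff]
  refine ⟨isScheme_ite_eq sortPair, ?_⟩
  have hn' : (2 : ℝ) ≤ n := mod_cast hn
  have hn1 : (0 : ℝ) < n - 1 := by linarith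
  refine (rev_pairValuation_sortPair ?_).trans ?_
  · positivity
  rw [Nat.cast_choose_two]
  field_simp
  ring
end
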